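/- arXiv:2106.02932 — 4 statements merged into one kernel-verified Lean document; each statement's English description precedes it below -/
import Mathlib

section
/- Let X be a normal space such that every one-point subset of X is Gδ. A nonzero ideal I of B₁(X) is a minimal ideal if and only if I is generated by the characteristic function χ_{p} for some p ∈ X. -/
open Filter Topology

def IsBaireOne {X : Type*} [TopologicalSpace X] (f : X → ℝ) : Prop :=
  ∃ F : ℕ → X → ℝ, (∀ n, Continuous (F n)) ∧
    ∀ x, Filter.Tendsto (fun n => F n x) Filter.atTop (nhds (f x))

def B1 (X : Type*) [TopologicalSpace X] : Subring (X → ℝ) where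
  carrier := {f | IsBaireOne f}
  zero_mem' := ⟨fun _ _ => 0, fun _ => continuous_const, fun _ => tendsto_const_nhds⟩
  one_mem' := ⟨fun _ _ => 1, fun _ => continuous_const, fun _ => tendsto_const_nhds⟩
  add_mem' := by
    rintro f g ⟨F, hF, hFf⟩ ⟨G, hG, hGg⟩
    exact ⟨fun n => F n + G n, fun n => (hF n).add (hG n), fun x => (hFf x).add (hGg x)⟩
  mul_mem' := by
    rintro f g ⟨F, hF, hFf⟩ ⟨G, hG, hGg⟩
    exact ⟨fun n => F n * G n, fun n => (hF n).mul (hG n), fun x => (hFf x).mul (hGg x)⟩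
  neg_mem' := by
    rintro f ⟨F, hF, hFf⟩
    exact ⟨fun n => -F n, fun n => (hF n).neg, fun x => (hFf x).neg⟩

def zset {X : Type*} [TopologicalSpace X] (f : ↥(B1 X)) : Set X := {x | (f : X → ℝ) x = 0}

noncomputable def chi {X : Type*} (p : X) : X → ℝ := Set.indicator {p} (fun _ => 1)

def IsFsigma {X : Type*} [TopologicalSpace X] (s : Set X) : Prop :=
  ∃ c : ℕ → Set X, (∀ n, IsClosed (c n)) ∧ s = ⋃ n, c n

lemma chi_apply_self {X : Type*} (p : X) : chi p p = 1 := by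
  simp [chi]

lemma chi_apply_ne {X : Type*} {p x : X} (h : x ≠ p) : chi p x = 0 := by
  simp [chi, Set.indicator_apply, h]

lemma chi_isBaireOne {X : Type*} [TopologicalSpace X] [T1Space X] [NormalSpace X]
    (p : X) (hp : IsGδ ({p} : Set X)) : IsBaireOne (chi p) := by
  obtain ⟨U, hUo, hU⟩ := hp.eq_iInter_nat
  have hpU : ∀ n, p ∈ U n := fun n => by
    have : p ∈ ⋂ n, U n := hU ▸ (Set.mem_singleton p)
    exact Set.mem_iInter.1 this n
  have hf : ∀ n, ∃ f : C(X, ℝ), Set.EqOn f 0 (U n)ᶜ ∧ Set.EqOn f 1 {p} := by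
    intro n
    obtain ⟨f, h0, h1, _⟩ := exists_continuous_zero_one_of_isClosed
      (isClosed_compl_iff.2 (hUo n)) isClosed_singleton
      (Set.disjoint_singleton_right.2 (by simpa using hpU n))
    exact ⟨f, h0, h1⟩
  choose f hf0 hf1 using hf
  refine ⟨fun n x => ∏ k ∈ Finset.range (n + 1), f k x,
    fun n => continuous_finset_prod _ (fun k _ => (f k).continuous), ?_⟩
  intro x
  by_cases hx : x = p
  · subst hx
    have : (fun n => ∏ k ∈ Finset.range (n + 1), f k x) = fun _ => 1 := by
      funext n
      exact Finset.prod_eq_one fun k _ => hf1 k rfl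
    rw [this, chi_apply_self]
    exact tendsto_const_nhds
  · obtain ⟨m, hm⟩ : ∃ m, x ∉ U m := by
      by_contra h
      push_neg at h
      have hx2 : x ∈ ⋂ n, U n := Set.mem_iInter.2 h
      rw [← hU] at hx2
      exact hx hx2
    rw [chi_apply_ne hx]
    apply tendsto_atTop_of_eventually_const (i₀ := m)
    intro n hn
    refine Finset.prod_eq_zero (Finset.mem_range.2 (Nat.lt_succ_of_le hn)) ?_
    exact hf0 m hm

theorem stmt_2 {X : Type*} [TopologicalSpace X] [T1Space X] [NormalSpace X]
    (hG : ∀ p : X, IsGδ ({p} : Set X))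
    (I : Ideal ↥(B1 X)) (hI : I ≠ ⊥) :
    IsAtom I ↔ ∃ (p : X) (g : ↥(B1 X)), (g : X → ℝ) = chi p ∧ I = Ideal.span {g} := by
  -- constant functions
  have const_mem : ∀ c : ℝ, (fun _ : X => c) ∈ B1 X := fun c =>
    ⟨fun _ _ => c, fun _ => continuous_const, fun _ => tendsto_const_nhds⟩
  -- key: for any a in B1 and g = chi p, a * g = (a p) • g, so if a p ≠ 0 then
  -- g = const (a p)⁻¹ * (a * g)
  have key : ∀ (p : X) (g : ↥(B1 X)), (g : X → ℝ) = chi p → ∀ a : ↥(B1 X),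
      (a : X → ℝ) p ≠ 0 →
      (⟨fun _ => ((a : X → ℝ) p)⁻¹, const_mem _⟩ : ↥(B1 X)) * (a * g) = g := by
    intro p g hg a hap
    ext x
    show ((a : X → ℝ) p)⁻¹ * ((a : X → ℝ) x * (g : X → ℝ) x) = (g : X → ℝ) x
    by_cases hx : x = p
    · subst hx
      rw [inv_mul_cancel_left₀ hap]
    · rw [hg, chi_apply_ne hx, mul_zero, mul_zero]
  constructor
  · rintro ⟨-, hmin⟩
    -- pick a nonzero element of I
    obtain ⟨f, hfI, hf0⟩ : ∃ f ∈ I, f ≠ 0 := by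
      by_contra h
      push_neg at h
      exact hI (le_antisymm (fun x hx => by simpa using h x hx) bot_le)
    obtain ⟨p, hp⟩ : ∃ p, (f : X → ℝ) p ≠ 0 := by
      by_contra h
      push_neg at h
      exact hf0 (Subtype.ext (funext h))
    set g : ↥(B1 X) := ⟨chi p, chi_isBaireOne p (hG p)⟩ with hgdef
    have hg : (g : X → ℝ) = chi p := rfl
    have hgI : g ∈ I := by
      have := key p g hg f hp
      rw [← this]
      exact Ideal.mul_mem_left _ _ (Ideal.mul_mem_right _ _ hfI)
    refine ⟨p, g, hg, ?_⟩
    have hle : Ideal.span {g} ≤ I := Ideal.span_le.2 (by simpa using hgI)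
    rcases lt_or_eq_of_le hle with h | h
    · exfalso
      have := hmin _ h
      have hg0 : g ≠ 0 := by
        intro h0
        have : (g : X → ℝ) p = 0 := by rw [h0]; rfl
        rw [hg, chi_apply_self] at this
        exact one_ne_zero this
      exact hg0 (by simpa [Ideal.span_singleton_eq_bot] using this)
    · exact h.symm
  · rintro ⟨p, g, hg, rfl⟩
    refine ⟨hI, fun J hJ => ?_⟩
    by_contra hJ0
    obtain ⟨h, hhJ, hh0⟩ : ∃ h ∈ J, h ≠ 0 := by
      by_contra hc
      push_neg at hc
      exact hJ0 (le_antisymm (fun x hx => by simpa using hc x hx) bot_le)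
    obtain ⟨a, ha⟩ : ∃ a, h = a * g := by
      have := hJ.le hhJ
      rw [Ideal.mem_span_singleton] at this
      obtain ⟨a, ha⟩ := this
      exact ⟨a, by rw [ha, mul_comm]⟩
    have hap : (a : X → ℝ) p ≠ 0 := by
      intro hap
      apply hh0
      ext x
      show (h : X → ℝ) x = 0
      have : (h : X → ℝ) x = (a : X → ℝ) x * (g : X → ℝ) x := by rw [ha]; rfl
      rw [this, hg]
      by_cases hx : x = p
      · subst hx; rw [hap, zero_mul]
      · rw [chi_apply_ne hx, mul_zero]
    have hgJ : g ∈ J := by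
      have := key p g hg a hap
      rw [← this, ← ha]
      exact Ideal.mul_mem_left _ _ hhJ
    exact hJ.ne (le_antisymm hJ.le (Ideal.span_le.2 (by simpa using hgJ)))
end

section
/- Let X be a normal space in which every one-point subset is Gδ. For every non-unit f ∈ B₁(X) and every positive integer r, there exists g ∈ B₁(X) with g ≠ 1 such that f = gʳ f. -/
open Filter Topology

/-!
Since `B₁(X)` is closed under `f ↦ 1/f` for nowhere vanishing `f`, a non-unit `f` vanishes at
some point `p`. In a normal space where `{p}` is a closed `Gδ` set, the characteristic function
`χ_p` is the pointwise limit of Urysohn functions separating `{p}` from the complements of a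
decreasing sequence of open sets with intersection `{p}`, so `g = 1 - χ_p` lies in `B₁(X)`.
Then `g ≠ 1`, and `gʳ f = f` because `g = 1` off `p` while `f p = 0`.
-/

section

variable {X : Type*} [TopologicalSpace X]

-- The denominators `F n ^ 2 + 1 / (n + 1)` never vanish and tend to `f ^ 2 ≠ 0`.
theorem IsBaireOne.inv {f : X → ℝ} (hf : IsBaireOne f) (h0 : ∀ x, f x ≠ 0) :
    IsBaireOne (fun x => (f x)⁻¹) := by
  obtain ⟨F, hFc, hFf⟩ := hf
  refine ⟨fun n x => F n x / (F n x ^ 2 + 1 / (n + 1)), fun n => ?_, fun x => ?_⟩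
  · exact (hFc n).div (((hFc n).pow 2).add continuous_const) fun x => by positivity
  · have hden : Tendsto (fun n : ℕ => F n x ^ 2 + 1 / (n + 1 : ℝ)) atTop (𝓝 (f x ^ 2 + 0)) :=
      ((hFf x).pow 2).add tendsto_one_div_add_atTop_nhds_zero_nat
    have hlim : f x / (f x ^ 2 + 0) = (f x)⁻¹ := by
      rw [add_zero, pow_two, div_mul_cancel_left₀ (h0 x)]
    have := (hFf x).div hden (by simpa using h0 x)
    rwa [hlim] at this

theorem IsBaireOne.indicator_one_of_isClosed_of_isGδ [NormalSpace X] {s : Set X}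
    (hs : IsClosed s) (hsδ : IsGδ s) : IsBaireOne (s.indicator 1) := by
  obtain ⟨U, hUo, rfl⟩ := isGδ_iff_eq_iInter_nat.mp hsδ
  have hVo : ∀ n, IsOpen (Set.dissipate U n) := fun n =>
    (Set.finite_Iic n).isOpen_biInter fun k _ => hUo k
  have hdisj : ∀ n, Disjoint (Set.dissipate U n)ᶜ (⋂ k, U k) := fun n =>
    disjoint_compl_left.mono_right
      ((Set.iInter_dissipate (s := U)).symm.subset.trans (Set.iInter_subset _ n))
  choose φ hφ0 hφ1 _ using fun n =>
    exists_continuous_zero_one_of_isClosed (hVo n).isClosed_compl hs (hdisj n)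
  refine ⟨fun n => φ n, fun n => (φ n).continuous, fun x => ?_⟩
  by_cases hx : x ∈ ⋂ k, U k
  · simp [Set.indicator_of_mem hx, hφ1 _ hx]
  · obtain ⟨m, hm⟩ := Set.mem_iInter.not.mp hx |> not_forall.mp
    rw [Set.indicator_of_notMem hx]
    refine tendsto_const_nhds.congr' ?_
    filter_upwards [eventually_ge_atTop m] with n hn
    exact (hφ0 n fun hxV => hm (Set.dissipate_subset hn hxV)).symm

theorem chi_mem_B1 [T1Space X] [NormalSpace X] {p : X} (hp : IsGδ ({p} : Set X)) :
    chi p ∈ B1 X :=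
  IsBaireOne.indicator_one_of_isClosed_of_isGδ isClosed_singleton hp

theorem zset_nonempty_of_not_isUnit {f : B1 X} (hf : ¬IsUnit f) : (zset f).Nonempty := by
  by_contra! h
  have h0 : ∀ x, (f : X → ℝ) x ≠ 0 := fun x hx => h.subset hx
  exact hf (IsUnit.of_mul_eq_one (b := ⟨_, f.2.inv h0⟩) (Subtype.ext (funext fun x =>
    mul_inv_cancel₀ (h0 x))))

end

theorem stmt_9_general {X : Type*} [TopologicalSpace X] [T1Space X] [NormalSpace X]
    (hG : ∀ p : X, IsGδ ({p} : Set X)) (f : ↥(B1 X)) (hf : ¬ IsUnit f)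
    (r : ℕ) :
    ∃ g : ↥(B1 X), g ≠ 1 ∧ f = g ^ r * f := by
  obtain ⟨p, hp⟩ := zset_nonempty_of_not_isUnit hf
  have hχp : chi p p = 1 := Set.indicator_of_mem (Set.mem_singleton p) _
  refine ⟨1 - ⟨chi p, chi_mem_B1 (hG p)⟩, fun h => ?_, Subtype.ext (funext fun x => ?_)⟩
  · simpa [hχp] using congrFun (congrArg Subtype.val h) p
  · show (f : X → ℝ) x = (1 - chi p x) ^ r * (f : X → ℝ) x
    by_cases hx : x = p
    · subst hx
      rw [show (f : X → ℝ) x = 0 from hp, mul_zero]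
    · simp [chi, Set.indicator_of_notMem (Set.mem_singleton_iff.not.mpr hx)]

theorem stmt_9 {X : Type*} [TopologicalSpace X] [T1Space X] [NormalSpace X]
    (hG : ∀ p : X, IsGδ ({p} : Set X)) (f : ↥(B1 X)) (hf : ¬ IsUnit f)
    (r : ℕ) (hr : 0 < r) :
    ∃ g : ↥(B1 X), g ≠ 1 ∧ f = g ^ r * f :=
  stmt_9_general hG f hf r
end

section
/- Let X be a normal space in which every one-point subset is Gδ. Then the following are equivalent: (1) C(X) = B₁(X); (2) X is discrete; (3) B₁(X) is a ring of quotients of C(X). -/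
open Filter Topology

open Function

/-- Writing `s = ⋂ n, U n` with `U n` open, Urysohn gives continuous `f n : X → [0, 1]` equal to
`1` on `s` and `0` off `U n`; the partial products `∏ k < N, f k` converge pointwise to the
indicator of `s`, being `1` on `s` and eventually `0` off it. -/
theorem isBaireOne_indicator_one_of_isClosed_of_isGδ {X : Type*} [TopologicalSpace X]
    [NormalSpace X] {s : Set X} (hs : IsClosed s) (hGs : IsGδ s) :
    IsBaireOne (s.indicator fun _ => 1) := by
  obtain ⟨U, hU, rfl⟩ := hGs.eq_iInter_nat
  have hurysohn : ∀ n, ∃ f : C(X, ℝ), Set.EqOn f 0 (U n)ᶜ ∧ Set.EqOn f 1 (⋂ k, U k) := by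
    intro n
    obtain ⟨f, h0, h1, -⟩ := exists_continuous_zero_one_of_isClosed (hU n).isClosed_compl hs
      (Set.disjoint_compl_left_iff_subset.2 (Set.iInter_subset U n))
    exact ⟨f, h0, h1⟩
  choose f hf0 hf1 using hurysohn
  refine ⟨fun N x => ∏ k ∈ Finset.range N, f k x, fun N => by fun_prop, fun x => ?_⟩
  by_cases hx : x ∈ ⋂ k, U k
  · simp only [Set.indicator_of_mem hx, Finset.prod_eq_one fun k _ => hf1 k hx]
    exact tendsto_const_nhds
  · obtain ⟨n, hxn⟩ : ∃ n, x ∉ U n := by simpa using hx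
    rw [Set.indicator_of_notMem hx]
    exact tendsto_atTop_of_eventually_const (i₀ := n + 1) fun N hN =>
      Finset.prod_eq_zero (Finset.mem_range.2 hN) (hf0 n hxn)

theorem isBaireOne_chi {X : Type*} [TopologicalSpace X] [T1Space X] [NormalSpace X] {p : X}
    (hp : IsGδ ({p} : Set X)) : IsBaireOne (chi p) :=
  isBaireOne_indicator_one_of_isClosed_of_isGδ isClosed_singleton hp

theorem support_chi_subset {X : Type*} (p : X) : support (chi p) ⊆ {p} :=
  Set.support_indicator_subset

theorem chi_ne_zero {X : Type*} (p : X) : chi p ≠ 0 := fun h => by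
  simpa [chi] using congrFun h p

theorem isOpen_singleton_of_continuous_of_support_subset {X M : Type*} [TopologicalSpace X]
    [TopologicalSpace M] [T1Space M] [Zero M] {g : X → M} {p : X} (hg : Continuous g)
    (hg0 : g ≠ 0) (hsupp : support g ⊆ {p}) : IsOpen ({p} : Set X) := by
  have hne : (support g).Nonempty :=
    Set.nonempty_iff_ne_empty.2 fun h => hg0 (support_eq_empty_iff.1 h)
  exact hne.subset_singleton_iff.1 hsupp ▸ hg.isOpen_support

theorem stmt_12 {X : Type*} [TopologicalSpace X] [T1Space X] [NormalSpace X]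
    (hG : ∀ p : X, IsGδ ({p} : Set X)) :
    [ (∀ f : X → ℝ, IsBaireOne f → Continuous f),
      DiscreteTopology X,
      (∀ f : X → ℝ, IsBaireOne f → f ≠ 0 →
        ∃ r : X → ℝ, Continuous r ∧ f * r ≠ 0 ∧ Continuous (f * r)) ].TFAE := by
  tfae_have 2 → 1 := fun _ _ _ => continuous_of_discreteTopology
  tfae_have 2 → 3 := fun _ f _ hf0 =>
    ⟨1, continuous_const, by simpa using hf0, continuous_of_discreteTopology⟩
  tfae_have 1 → 2 := fun h => discreteTopology_iff_isOpen_singleton.2 fun p =>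
    isOpen_singleton_of_continuous_of_support_subset (h _ (isBaireOne_chi (hG p)))
      (chi_ne_zero p) (support_chi_subset p)
  tfae_have 3 → 2 := fun h => discreteTopology_iff_isOpen_singleton.2 fun p => by
    obtain ⟨r, -, hr0, hr⟩ := h (chi p) (isBaireOne_chi (hG p)) (chi_ne_zero p)
    exact isOpen_singleton_of_continuous_of_support_subset hr hr0
      ((support_mul_subset_left _ _).trans (support_chi_subset p))
  tfae_finish
end

section
/- Let X be a topological space and A a nonempty nowhere dense perfect subset of X that is locally compact (in its subspace topology). Then T'(X) is not contained in B₁(X); in particular there exists f : X → ℝ continuous on a dense open subset of X that is not a Baire one function. -/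
open Filter Topology

/-!
If every real function on `A` were Baire one, the indicators of points would already make `A`
Hausdorff; being moreover locally compact and without isolated points, `A` then carries a Cantor
scheme `K : List Bool → Set A` of nonempty compact sets. For `Q ⊆ 2^ℕ` dense and codense, let `E`
be the union of the branches `⋂ n, K (y|n)` over `y ∈ Q`. The indicator of `E` being Baire one
makes `E` and `Eᶜ` both Fσ in `A`; by compactness the set of branches meeting a closed set is
closed, so `Q` and `Qᶜ` would both be Fσ in `2^ℕ`, contradicting the Baire category theorem.
A function on `A` that is not Baire one, extended by zero, is continuous on the open dense set
`Aᶜ` and still not Baire one.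
-/

open PiNat

section

variable {Y : Type*} [TopologicalSpace Y]

lemma IsBaireOne.comp_continuous {Z : Type*} [TopologicalSpace Z] {f : Y → ℝ}
    (hf : IsBaireOne f) {φ : Z → Y} (hφ : Continuous φ) : IsBaireOne (f ∘ φ) := by
  obtain ⟨F, hFc, hFf⟩ := hf
  exact ⟨fun n => F n ∘ φ, fun n => (hFc n).comp hφ, fun z => hFf (φ z)⟩

lemma IsBaireOne.isFsigma_of_indicator {E : Set Y} (h : IsBaireOne (E.indicator 1)) :
    IsFsigma E := by
  obtain ⟨F, hFc, hFE⟩ := h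
  have hE : ∀ x, x ∈ E ↔ ∃ N, ∀ n ≥ N, 1 / 2 ≤ F n x := by
    intro x
    rw [← eventually_atTop]
    by_cases hx : x ∈ E
    · have hlim : Tendsto (fun n => F n x) atTop (𝓝 1) := by simpa [hx] using hFE x
      exact iff_of_true hx (hlim.eventually_const_le one_half_lt_one)
    · have hlim : Tendsto (fun n => F n x) atTop (𝓝 0) := by simpa [hx] using hFE x
      refine iff_of_false hx fun hge => ?_
      obtain ⟨n, hge, hlt⟩ := (hge.and (hlim.eventually_lt_const one_half_pos)).exists
      exact (hge.trans_lt hlt).false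
  refine ⟨fun N => {x | ∀ n ≥ N, 1 / 2 ≤ F n x}, fun N => ?_,
    Set.ext fun x => by simp only [hE, Set.mem_iUnion, Set.mem_ofPred_eq]⟩
  simp only [Set.ofPred_forall]
  exact isClosed_iInter fun n => isClosed_iInter fun _ => isClosed_le continuous_const (hFc n)

lemma IsBaireOne.indicator_compl {E : Set Y} (h : IsBaireOne (E.indicator 1)) :
    IsBaireOne (Eᶜ.indicator 1) := by
  rw [Set.indicator_compl]
  exact (B1 Y).sub_mem (B1 Y).one_mem h

lemma t2Space_of_isBaireOne_chi (h : ∀ p : Y, IsBaireOne (chi p)) : T2Space Y := by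
  choose F hFc hF using h
  refine T2Space.of_injective_continuous (f := fun x (pn : Y × ℕ) => F pn.1 pn.2 x)
    (fun a b hab => ?_) (continuous_pi fun pn => hFc pn.1 pn.2)
  by_contra hne
  have hb : (fun n => F a n b) = fun n => F a n a := funext fun n => congrFun hab.symm (a, n)
  have := tendsto_nhds_unique (hF a a) (hb ▸ hF a b)
  simp [chi, Ne.symm hne] at this

lemma IsFsigma.isGδ_compl {s : Set Y} (hs : IsFsigma s) : IsGδ sᶜ := by
  obtain ⟨c, hc, rfl⟩ := hs
  rw [Set.compl_iUnion]
  exact IsGδ.iInter_of_isOpen fun n => (hc n).isOpen_compl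

lemma Dense.not_isFsigma_and_isFsigma_compl [BaireSpace Y] [Nonempty Y] {s : Set Y}
    (hs : Dense s) (hsc : Dense sᶜ) : ¬ (IsFsigma s ∧ IsFsigma sᶜ) := by
  rintro ⟨h, hc⟩
  have := Dense.inter_of_Gδ h.isGδ_compl hc.isGδ_compl hsc (by rwa [compl_compl])
  simpa using this.nonempty

lemma dense_setOf_eventually_eq {α : Type*} [TopologicalSpace α] [DiscreteTopology α] (a : α) :
    Dense {y : ℕ → α | ∀ᶠ n in atTop, y n = a} := by
  rw [(isTopologicalBasis_cylinders _).dense_iff]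
  rintro _ ⟨x, n, rfl⟩ -
  exact ⟨fun i => if i < n then x i else a, fun i hi => if_pos hi,
    eventually_atTop.2 ⟨n, fun m hm => if_neg (not_lt.2 hm)⟩⟩

lemma exists_dense_dense_compl_cantor : ∃ Q : Set (ℕ → Bool), Dense Q ∧ Dense Qᶜ := by
  refine ⟨{y | ∀ᶠ n in atTop, y n = false}, dense_setOf_eventually_eq false,
    (dense_setOf_eventually_eq true).mono fun y hy hyQ => ?_⟩
  obtain ⟨n, htrue, hfalse⟩ := (hy.and hyQ).exists
  exact Bool.noConfusion (htrue.symm.trans hfalse)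

structure IsCompactCantorScheme (K : List Bool → Set Y) : Prop where
  isClosed : ∀ s, IsClosed (K s)
  nonempty : ∀ s, (K s).Nonempty
  antitone : CantorScheme.Antitone K
  disjoint : CantorScheme.Disjoint K
  isCompact_nil : IsCompact (K [])

def schemeBranch (K : List Bool → Set Y) (y : ℕ → Bool) : Set Y := ⋂ n, K (res y n)

namespace IsCompactCantorScheme

variable {K : List Bool → Set Y} (hK : IsCompactCantorScheme K)
include hK

lemma subset_nil (s : List Bool) : K s ⊆ K [] := by
  induction s with
  | nil => exact subset_rfl
  | cons b s ih => exact (hK.antitone s b).trans ih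

lemma isCompact (s : List Bool) : IsCompact (K s) :=
  hK.isCompact_nil.of_isClosed_subset (hK.isClosed s) (hK.subset_nil s)

lemma schemeBranch_nonempty (y : ℕ → Bool) : (schemeBranch K y).Nonempty :=
  IsCompact.nonempty_iInter_of_sequence_nonempty_isCompact_isClosed _
    (fun _ => hK.antitone _ _) (fun _ => hK.nonempty _) (hK.isCompact _) (fun _ => hK.isClosed _)

lemma disjoint_schemeBranch {y y' : ℕ → Bool} (hne : y ≠ y') :
    Disjoint (schemeBranch K y) (schemeBranch K y') := by
  set m := firstDiff y y'
  have hres : res y m = res y' m := res_eq_res.2 fun i hi => apply_eq_of_lt_firstDiff hi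
  have hsplit := hK.disjoint (res y m) (apply_firstDiff_ne hne)
  refine hsplit.mono (Set.iInter_subset _ (m + 1)) ?_
  rw [hres]
  exact Set.iInter_subset (fun n => K (res y' n)) (m + 1)

lemma isClosed_setOf_inter_schemeBranch_nonempty {F : Set Y} (hF : IsClosed F) :
    IsClosed {y | (F ∩ schemeBranch K y).Nonempty} := by
  rw [← isOpen_compl_iff, isOpen_iff_forall_mem_open]
  intro y hy
  obtain ⟨n, hn⟩ : ∃ n, F ∩ K (res y n) = ∅ := by
    by_contra! h
    refine hy ?_
    change (F ∩ ⋂ n, K (res y n)).Nonempty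
    rw [Set.inter_iInter]
    exact IsCompact.nonempty_iInter_of_sequence_nonempty_isCompact_isClosed _
      (fun _ => Set.inter_subset_inter_right _ (hK.antitone _ _)) h
      ((hK.isCompact _).of_isClosed_subset (hF.inter (hK.isClosed _)) Set.inter_subset_right)
      (fun _ => hF.inter (hK.isClosed _))
  refine ⟨cylinder y n, fun y' hy' hne => ?_, isOpen_cylinder _ y n, self_mem_cylinder y n⟩
  obtain ⟨x, hxF, hxy'⟩ := hne
  have hres : res y' n = res y n := by rwa [cylinder_eq_res] at hy'
  have hx : x ∈ K (res y n) := hres ▸ Set.mem_iInter.1 hxy' n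
  exact Set.eq_empty_iff_forall_notMem.1 hn x ⟨hxF, hx⟩

lemma isFsigma_setOf_inter_schemeBranch_nonempty {F : Set Y} (hF : IsFsigma F) :
    IsFsigma {y | (F ∩ schemeBranch K y).Nonempty} := by
  obtain ⟨c, hc, rfl⟩ := hF
  refine ⟨fun n => {y | (c n ∩ schemeBranch K y).Nonempty},
    fun n => hK.isClosed_setOf_inter_schemeBranch_nonempty (hc n), ?_⟩
  ext y
  simp only [Set.iUnion_inter, Set.nonempty_iUnion, Set.mem_ofPred_eq, Set.mem_iUnion]

lemma not_isBaireOne_indicator_biUnion_schemeBranch {Q : Set (ℕ → Bool)} (hQ : Dense Q)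
    (hQc : Dense Qᶜ) : ¬ IsBaireOne ((⋃ y ∈ Q, schemeBranch K y).indicator 1) := by
  set E := ⋃ y ∈ Q, schemeBranch K y
  intro h
  have hmem : ∀ {x y}, x ∈ E → x ∈ schemeBranch K y → y ∈ Q := by
    intro x y hxE hxy
    obtain ⟨y', hy'Q, hxy'⟩ := Set.mem_iUnion₂.1 hxE
    by_contra hyQ
    exact Set.disjoint_left.1 (hK.disjoint_schemeBranch (ne_of_mem_of_not_mem hy'Q hyQ)) hxy' hxy
  have hE : {y | (E ∩ schemeBranch K y).Nonempty} = Q := by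
    ext y
    refine ⟨fun ⟨x, hxE, hxy⟩ => hmem hxE hxy, fun hy => ?_⟩
    obtain ⟨x, hx⟩ := hK.schemeBranch_nonempty y
    exact ⟨x, Set.mem_biUnion hy hx, hx⟩
  have hEc : {y | (Eᶜ ∩ schemeBranch K y).Nonempty} = Qᶜ := by
    ext y
    refine ⟨fun ⟨x, hxE, hxy⟩ hy => hxE (Set.mem_biUnion hy hxy), fun hy => ?_⟩
    obtain ⟨x, hx⟩ := hK.schemeBranch_nonempty y
    exact ⟨x, fun hxE => hy (hmem hxE hx), hx⟩
  refine hQ.not_isFsigma_and_isFsigma_compl hQc ⟨?_, ?_⟩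
  · rw [← hE]
    exact hK.isFsigma_setOf_inter_schemeBranch_nonempty h.isFsigma_of_indicator
  · rw [← hEc]
    exact hK.isFsigma_setOf_inter_schemeBranch_nonempty h.indicator_compl.isFsigma_of_indicator

end IsCompactCantorScheme

lemma exists_disjoint_closed_subsets_nonempty_interior [T2Space Y] [RegularSpace Y]
    [PerfectSpace Y] {K : Set Y} (hK : (interior K).Nonempty) :
    ∃ L : Bool → Set Y, (∀ b, IsClosed (L b) ∧ (interior (L b)).Nonempty ∧ L b ⊆ K) ∧
      Disjoint (L false) (L true) := by
  obtain ⟨y, hy⟩ := hK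
  obtain ⟨z, hzK, hzy⟩ : (interior K ∩ {y}ᶜ).Nonempty :=
    Filter.nonempty_of_mem (f := 𝓝[≠] y)
      (inter_mem (mem_nhdsWithin_of_mem_nhds (isOpen_interior.mem_nhds hy)) self_mem_nhdsWithin)
  obtain ⟨Wy, Wz, hWy, hWz, hyW, hzW, hWdisj⟩ := t2_separation (Ne.symm hzy)
  obtain ⟨Ly, hLyn, hLyc, hLys⟩ := exists_mem_nhds_isClosed_subset
    ((isOpen_interior.inter hWy).mem_nhds ⟨hy, hyW⟩)
  obtain ⟨Lz, hLzn, hLzc, hLzs⟩ := exists_mem_nhds_isClosed_subset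
    ((isOpen_interior.inter hWz).mem_nhds ⟨hzK, hzW⟩)
  refine ⟨fun b => if b then Lz else Ly, Bool.forall_bool.2 ⟨?_, ?_⟩, ?_⟩
  · exact ⟨hLyc, ⟨y, mem_interior_iff_mem_nhds.2 hLyn⟩,
      hLys.trans (Set.inter_subset_left.trans interior_subset)⟩
  · exact ⟨hLzc, ⟨z, mem_interior_iff_mem_nhds.2 hLzn⟩,
      hLzs.trans (Set.inter_subset_left.trans interior_subset)⟩
  · exact hWdisj.mono (hLys.trans Set.inter_subset_right) (hLzs.trans Set.inter_subset_right)

lemma exists_isCompactCantorScheme [T2Space Y] [LocallyCompactSpace Y] [PerfectSpace Y]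
    [Nonempty Y] : ∃ K : List Bool → Set Y, IsCompactCantorScheme K := by
  let Piece := {K : Set Y // IsClosed K ∧ (interior K).Nonempty}
  have hsplit : ∀ K : Piece, ∃ L : Bool → Piece,
      (∀ b, (L b : Set Y) ⊆ K) ∧ Disjoint (L false : Set Y) (L true) := by
    intro K
    obtain ⟨L, hL, hdisj⟩ := exists_disjoint_closed_subsets_nonempty_interior K.2.2
    exact ⟨fun b => ⟨L b, (hL b).1, (hL b).2.1⟩, fun b => (hL b).2.2, hdisj⟩
  choose split hsub hdisj using hsplit
  obtain ⟨y₀⟩ := ‹Nonempty Y›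
  obtain ⟨C, hC, hCy₀⟩ := exists_compact_mem_nhds y₀
  let S : List Bool → Piece := fun s =>
    s.foldr (fun b K => split K b) ⟨C, hC.isClosed, y₀, mem_interior_iff_mem_nhds.2 hCy₀⟩
  refine ⟨fun s => S s, fun s => (S s).2.1, fun s => (S s).2.2.mono interior_subset,
    fun s b => hsub (S s) b, fun s a b hab => ?_, hC⟩
  cases a <;> cases b
  · exact absurd rfl hab
  · exact hdisj (S s)
  · exact (hdisj (S s)).symm
  · exact absurd rfl hab

lemma exists_not_isBaireOne [LocallyCompactSpace Y] [PerfectSpace Y] [Nonempty Y] :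
    ∃ g : Y → ℝ, ¬ IsBaireOne g := by
  by_contra! h
  have := t2Space_of_isBaireOne_chi fun p : Y => h (chi p)
  obtain ⟨K, hK⟩ := exists_isCompactCantorScheme (Y := Y)
  obtain ⟨Q, hQ, hQc⟩ := exists_dense_dense_compl_cantor
  exact hK.not_isBaireOne_indicator_biUnion_schemeBranch hQ hQc (h _)

end

theorem stmt_15 {X : Type*} [TopologicalSpace X] (A : Set X) (hne : A.Nonempty)
    (hnwd : IsNowhereDense A) (hperf : Perfect A) (hlc : LocallyCompactSpace A) :
    ∃ f : X → ℝ, (∃ D : Set X, IsOpen D ∧ Dense D ∧ ContinuousOn f D) ∧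
      ¬ IsBaireOne f := by
  have : Nonempty A := hne.to_subtype
  have : PerfectSpace A := perfectSpace_iff_forall_not_isolated.2 fun x =>
    nhds_ne_subtype_neBot_iff.2 (hperf.acc x x.2)
  obtain ⟨g, hg⟩ : ∃ g : A → ℝ, ¬ IsBaireOne g := exists_not_isBaireOne
  obtain ⟨hopen, hdense⟩ := isClosed_isNowhereDense_iff_compl.1 ⟨hperf.closed, hnwd⟩
  refine ⟨Function.extend (↑) g 0, ⟨Aᶜ, hopen, hdense, ?_⟩, fun hf => hg ?_⟩
  · refine continuousOn_const.congr fun x hx => Function.extend_apply' _ _ _ ?_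
    rintro ⟨a, rfl⟩
    exact hx a.2
  · have := hf.comp_continuous (continuous_subtype_val (p := (· ∈ A)))
    rwa [Function.extend_comp Subtype.val_injective] at this
end
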